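/- arXiv:2601.04430 — 3 statements merged into one kernel-verified Lean document; each statement's English description precedes it below -/
import Mathlib

section
/- Let k be a field and let A = Algebra.adjoin k {X³, X⁴, X⁵} be the k-subalgebra of k[X] generated by X³, X⁴ and X⁵ (the coordinate ring of the monomial curve with semigroup ⟨3,4,5⟩). Then the conductor of A in k[X], namely {f ∈ k[X] : f·g ∈ A for all g ∈ k[X]}, equals the ideal of k[X] generated by X³. -/
open Polynomial

-- auxiliary: X^(n+3) ∈ adjoin
lemma aux_pow (k : Type*) [Field k] (n : ℕ) :
    (X : k[X]) ^ (n + 3) ∈ Algebra.adjoin k ({X ^ 3, X ^ 4, X ^ 5} : Set k[X]) := by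
  induction n using Nat.strong_induction_on with
  | _ n ih =>
    match n with
    | 0 => exact Algebra.subset_adjoin (by simp)
    | 1 => exact Algebra.subset_adjoin (by simp)
    | 2 => exact Algebra.subset_adjoin (by simp)
    | (m+3) =>
      have h1 : (X : k[X]) ^ (m + 3 + 3) = X ^ (m + 3) * X ^ 3 := by ring
      rw [h1]
      exact mul_mem (ih m (by omega)) (Algebra.subset_adjoin (by simp))

lemma aux_mul (k : Type*) [Field k] (p : k[X]) :
    (X : k[X]) ^ 3 * p ∈ Algebra.adjoin k ({X ^ 3, X ^ 4, X ^ 5} : Set k[X]) := by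
  induction p using Polynomial.induction_on with
  | C a =>
    have : (X : k[X]) ^ 3 * C a = a • X ^ 3 := by
      rw [Polynomial.smul_eq_C_mul]; ring
    rw [this]
    exact Subalgebra.smul_mem _ (Algebra.subset_adjoin (by simp)) a
  | add p q hp hq => rw [mul_add]; exact add_mem hp hq
  | monomial n a _ =>
    have : (X : k[X]) ^ 3 * (C a * X ^ (n + 1)) = a • X ^ (n + 1 + 3) := by
      rw [Polynomial.smul_eq_C_mul]; ring
    rw [this]
    exact Subalgebra.smul_mem _ (aux_pow k (n+1)) a

noncomputable def Bsub (k : Type*) [Field k] : Subalgebra k k[X] where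
  carrier := {p | p.coeff 1 = 0 ∧ p.coeff 2 = 0}
  mul_mem' := by
    rintro p q ⟨h1, h2⟩ ⟨g1, g2⟩
    constructor
    · rw [Polynomial.coeff_mul]
      rw [show (1:ℕ) = 0 + 1 from rfl, Finset.Nat.sum_antidiagonal_eq_sum_range_succ_mk]
      simp [Finset.sum_range_succ, h1, g1]
    · rw [Polynomial.coeff_mul]
      rw [show (2:ℕ) = 1 + 1 from rfl, Finset.Nat.sum_antidiagonal_eq_sum_range_succ_mk]
      simp [Finset.sum_range_succ, h1, h2, g1, g2]
  add_mem' := by rintro p q ⟨h1, h2⟩ ⟨g1, g2⟩; simp_all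
  algebraMap_mem' := by intro r; simp [Polynomial.coeff_C]

lemma adjoin_le_B (k : Type*) [Field k] :
    Algebra.adjoin k ({X ^ 3, X ^ 4, X ^ 5} : Set k[X]) ≤ Bsub k := by
  apply Algebra.adjoin_le
  rintro p (rfl | rfl | rfl) <;> constructor <;> simp [Polynomial.coeff_X_pow]

/-- The conductor of the monomial curve coordinate ring `A = k[X³, X⁴, X⁵]`
inside its normalization `k[X]` is the ideal generated by `X³`. -/
theorem stmt_9 (k : Type*) [Field k] :
    {f : k[X] | ∀ g : k[X], f * g ∈ Algebra.adjoin k ({X ^ 3, X ^ 4, X ^ 5} : Set k[X])} =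
      (Ideal.span ({X ^ 3} : Set k[X]) : Set k[X]) := by
  ext f
  simp only [Set.mem_setOf_eq, SetLike.mem_coe, Ideal.mem_span_singleton]
  constructor
  · intro h
    rw [Polynomial.X_pow_dvd_iff]
    intro d hd
    interval_cases d
    · have := (adjoin_le_B k (h X)).1
      simpa [Polynomial.coeff_mul_X] using this
    · exact (adjoin_le_B k (by simpa using h 1)).1
    · exact (adjoin_le_B k (by simpa using h 1)).2
  · rintro ⟨c, rfl⟩ g
    have : X ^ 3 * c * g = X ^ 3 * (c * g) := by ring
    rw [this]
    exact aux_mul k (c * g)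
end

section
/- Let k be a field and let A = Algebra.adjoin k {X², X³} ⊆ k[X], viewed as a k-submodule of k[X]. Then the k-vector space k[X]/A has dimension 1; that is, the δ-invariant of the cusp singularity k[t², t³] equals 1. -/
/-!
The monomials `X ^ n` with `n ≠ 1` are products of `X ^ 2` and `X ^ 3`, while the polynomials
with vanishing linear coefficient form a subalgebra (since `(p * q)₁ = p₀ q₁ + p₁ q₀`). Hence
`k[X², X³]` is exactly the kernel of the surjection `p ↦ p₁` onto `k`, and the quotient is `k`.
-/

open Polynomial

namespace Polynomial

variable (R : Type*) [CommSemiring R]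

def withoutLinearTerm : Subalgebra R R[X] where
  carrier := {p | p.coeff 1 = 0}
  mul_mem' {p q} hp hq := by simp_all [mul_coeff_one]
  add_mem' hp hq := by simp_all
  algebraMap_mem' r := by simp

variable {R}

theorem mem_withoutLinearTerm {p : R[X]} : p ∈ withoutLinearTerm R ↔ p.coeff 1 = 0 := Iff.rfl

theorem X_pow_mem_adjoin_X_sq_X_cube {n : ℕ} (hn : n ≠ 1) :
    (X : R[X]) ^ n ∈ Algebra.adjoin R {X ^ 2, X ^ 3} := by
  obtain ⟨a, b, rfl⟩ : ∃ a b, n = 2 * a + 3 * b :=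
    ⟨(n - 3 * (n % 2)) / 2, n % 2, by omega⟩
  rw [pow_add, pow_mul, pow_mul]
  exact mul_mem (pow_mem (Algebra.subset_adjoin (by simp)) a)
    (pow_mem (Algebra.subset_adjoin (by simp)) b)

theorem adjoin_X_sq_X_cube_eq_withoutLinearTerm :
    Algebra.adjoin R {X ^ 2, X ^ 3} = withoutLinearTerm R := by
  refine le_antisymm (Algebra.adjoin_le ?_) fun p hp ↦ ?_
  · rintro p (rfl | rfl) <;> simp [mem_withoutLinearTerm, coeff_X_pow]
  · rw [as_sum_support_C_mul_X_pow p]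
    refine Subalgebra.sum_mem _ fun n hn ↦ mul_mem (Subalgebra.algebraMap_mem _ _) ?_
    refine X_pow_mem_adjoin_X_sq_X_cube fun hn1 ↦ ?_
    exact mem_support_iff.mp hn (hn1 ▸ mem_withoutLinearTerm.mp hp)

theorem toSubmodule_withoutLinearTerm :
    Subalgebra.toSubmodule (withoutLinearTerm R) = LinearMap.ker (lcoeff R 1) := by
  ext p
  simp [mem_withoutLinearTerm]

theorem lcoeff_surjective (n : ℕ) : Function.Surjective (lcoeff R n) :=
  fun c ↦ ⟨monomial n c, by simp⟩

end Polynomial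

/-- The δ-invariant of the cusp: for `A = k[X², X³] ⊆ k[X]` viewed as a
`k`-submodule, the `k`-vector space `k[X]/A` has dimension `1`. -/
theorem stmt_12 (k : Type*) [Field k] :
    Module.finrank k
      (k[X] ⧸ Subalgebra.toSubmodule (Algebra.adjoin k ({X ^ 2, X ^ 3} : Set k[X]))) = 1 := by
  rw [adjoin_X_sq_X_cube_eq_withoutLinearTerm, toSubmodule_withoutLinearTerm,
    ((lcoeff k 1).quotKerEquivOfSurjective (lcoeff_surjective 1)).finrank_eq,
    Module.finrank_self]
end

section
/- Let k be a field, let S be an additive submonoid of ℕ, and let c ∈ ℕ be the conductor of S, i.e. every n ≥ c belongs to S and, if c ≥ 1, then c − 1 ∉ S. Let A ⊆ k[X] be the k-linear span of the monomials {Xⁿ : n ∈ S} (a k-subalgebra of k[X]). Then the conductor of A in k[X], namely {f ∈ k[X] : f·g ∈ A for all g ∈ k[X]}, equals the ideal of k[X] generated by X^c. -/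
open Polynomial

lemma coeff_span_eq_zero (k : Type*) [Field k] (S : AddSubmonoid ℕ)
    (p : k[X]) (hp : p ∈ Submodule.span k {p : k[X] | ∃ n ∈ S, p = X ^ n})
    (m : ℕ) (hm : m ∉ S) : p.coeff m = 0 := by
  induction hp using Submodule.span_induction with
  | mem x hx =>
    obtain ⟨n, hn, rfl⟩ := hx
    rw [Polynomial.coeff_X_pow]
    simp only [ite_eq_right_iff]
    intro h; exact absurd (h ▸ hn) hm
  | zero => simp
  | add x y _ _ hx hy => simp [hx, hy]
  | smul a x _ hx => simp [hx]

lemma X_pow_mul_mem (k : Type*) [Field k] (S : AddSubmonoid ℕ) (c : ℕ)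
    (hc : ∀ n : ℕ, c ≤ n → n ∈ S) (p : k[X]) :
    X ^ c * p ∈ Submodule.span k {p : k[X] | ∃ n ∈ S, p = X ^ n} := by
  induction p using Polynomial.induction_on' with
  | add p q hp hq => rw [mul_add]; exact Submodule.add_mem _ hp hq
  | monomial n a =>
    have : (X ^ c : k[X]) * monomial n a = a • X ^ (c + n) := by
      rw [← Polynomial.C_mul_X_pow_eq_monomial, Polynomial.smul_eq_C_mul]
      ring
    rw [this]
    exact Submodule.smul_mem _ _ (Submodule.subset_span ⟨c + n, hc _ (by omega), rfl⟩)

/-- Let `S` be an additive submonoid of `ℕ` with conductor `c` (every `n ≥ c`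
lies in `S`, and if `c ≥ 1` then `c − 1 ∉ S`), and let `A ⊆ k[X]` be the
`k`-linear span of the monomials `Xⁿ` for `n ∈ S`. Then the conductor of `A`
in `k[X]`, namely `{f : f·g ∈ A for all g}`, is the ideal generated by `X^c`. -/
theorem stmt_18 (k : Type*) [Field k] (S : AddSubmonoid ℕ) (c : ℕ)
    (hc : ∀ n : ℕ, c ≤ n → n ∈ S) (hc' : 1 ≤ c → c - 1 ∉ S) :
    {f : k[X] | ∀ g : k[X],
        f * g ∈ Submodule.span k {p : k[X] | ∃ n ∈ S, p = X ^ n}} =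
      (Ideal.span ({X ^ c} : Set k[X]) : Set k[X]) := by
  ext f
  simp only [Set.mem_setOf_eq, SetLike.mem_coe, Ideal.mem_span_singleton]
  constructor
  · intro hf
    rw [Polynomial.X_pow_dvd_iff]
    intro n hn
    have hc1 : 1 ≤ c := by omega
    have h := hf (X ^ (c - 1 - n))
    have h0 := coeff_span_eq_zero k S _ h (c - 1) (hc' hc1)
    rwa [Polynomial.coeff_mul_X_pow', if_pos (by omega), show c - 1 - (c - 1 - n) = n by omega] at h0
  · rintro ⟨h, rfl⟩ g
    rw [mul_assoc]
    exact X_pow_mul_mem k S c hc _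
end
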